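/- Let a, b, g be Boolean functions on assignments over a finite variable set V, and let f = a ∨ b (pointwise disjunction). If each of the four functions: the constant false, a, b, and a ⊕ b, is statistically independent of g, then f is statistically independent of g. -/
import Mathlib


namespace Danira

instance : Std.Commutative xor := ⟨Bool.xor_comm⟩
instance : Std.Associative xor := ⟨Bool.xor_assoc⟩
instance : Std.Commutative or := ⟨Bool.or_comm⟩
instance : Std.Associative or := ⟨Bool.or_assoc⟩

variable {V : Type*} [Fintype V] [DecidableEq V]

/-- Number of satisfying assignments of a Boolean function. -/
def weight (f : (V → Bool) → Bool) : ℕ :=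
  (Finset.univ.filter fun α : V → Bool => f α = true).card

/-- A Boolean function is balanced if exactly half of all assignments satisfy it. -/
def Balanced (f : (V → Bool) → Bool) : Prop :=
  weight f = 2 ^ (Fintype.card V - 1)

/-- Statistical independence of two Boolean functions. -/
def StatIndep (f g : (V → Bool) → Bool) : Prop :=
  weight (fun α => f α && g α) * weight (fun α => !f α)
    = weight (fun α => !f α && g α) * weight f

/-- `f` functionally depends on variable `x`. -/
def FunDep (f : (V → Bool) → Bool) (x : V) : Prop :=
  ∃ α β : V → Bool, (∀ v, v ≠ x → α v = β v) ∧ f α ≠ f β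

instance (f : (V → Bool) → Bool) (x : V) : Decidable (FunDep f x) := by
  unfold FunDep; infer_instance

/-- Partial evaluation `f[b/x]`. -/
def subst (f : (V → Bool) → Bool) (x : V) (b : Bool) : (V → Bool) → Bool :=
  fun α => f (Function.update α x b)

/-- Variables that can be linearly factored out of `f`. -/
def Fact (f : (V → Bool) → Bool) : Finset V :=
  Finset.univ.filter fun x => ∀ α, xor (subst f x false α) (subst f x true α) = true

/-- Essential variables of `f`. -/
def Ess (f : (V → Bool) → Bool) : Finset V :=
  Finset.univ.filter fun x => FunDep f x


lemma weight_eq_sum (f : (V → Bool) → Bool) :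
    weight f = ∑ α : V → Bool, (f α).toNat := by
  unfold weight
  rw [Finset.card_filter]
  exact Finset.sum_congr rfl fun α _ => by cases f α <;> simp

lemma weight_compl (f : (V → Bool) → Bool) :
    weight f + weight (fun α => !f α) = Fintype.card (V → Bool) := by
  rw [weight_eq_sum, weight_eq_sum, ← Finset.sum_add_distrib]
  rw [show (Fintype.card (V → Bool)) = ∑ _α : V → Bool, 1 by simp]
  exact Finset.sum_congr rfl fun α _ => by cases f α <;> simp

lemma weight_split (f g : (V → Bool) → Bool) :
    weight (fun α => f α && g α) + weight (fun α => !f α && g α) = weight g := by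
  rw [weight_eq_sum, weight_eq_sum, weight_eq_sum, ← Finset.sum_add_distrib]
  exact Finset.sum_congr rfl fun α _ => by cases f α <;> cases g α <;> simp

lemma statIndep_iff (f g : (V → Bool) → Bool) :
    StatIndep f g ↔
      weight (fun α => f α && g α) * Fintype.card (V → Bool) = weight g * weight f := by
  have h1 := weight_compl f
  have h2 := weight_split f g
  unfold StatIndep
  constructor
  · intro h
    calc weight (fun α => f α && g α) * Fintype.card (V → Bool)
        = weight (fun α => f α && g α) * (weight f + weight (fun α => !f α)) := by rw [h1]
      _ = weight (fun α => f α && g α) * weight f + weight (fun α => f α && g α) * weight (fun α => !f α) := by ring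
      _ = weight (fun α => f α && g α) * weight f + weight (fun α => !f α && g α) * weight f := by rw [h]
      _ = (weight (fun α => f α && g α) + weight (fun α => !f α && g α)) * weight f := by ring
      _ = weight g * weight f := by rw [h2]
  · intro h
    have : weight (fun α => f α && g α) * weight f + weight (fun α => f α && g α) * weight (fun α => !f α)
        = weight (fun α => f α && g α) * weight f + weight (fun α => !f α && g α) * weight f := by
      calc weight (fun α => f α && g α) * weight f + weight (fun α => f α && g α) * weight (fun α => !f α)
          = weight (fun α => f α && g α) * (weight f + weight (fun α => !f α)) := by ring
        _ = weight g * weight f := by rw [h1, h]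
        _ = (weight (fun α => f α && g α) + weight (fun α => !f α && g α)) * weight f := by rw [h2]
        _ = weight (fun α => f α && g α) * weight f + weight (fun α => !f α && g α) * weight f := by ring
    omega

theorem stmt5 (a b g : (V → Bool) → Bool)
    (h0 : StatIndep (fun _ => false) g)
    (ha : StatIndep a g)
    (hb : StatIndep b g)
    (hab : StatIndep (fun α => xor (a α) (b α)) g) :
    StatIndep (fun α => a α || b α) g := by
  rw [statIndep_iff] at ha hb hab ⊢
  have key1 : weight (fun α => a α && g α) + weight (fun α => b α && g α)
      + weight (fun α => (xor (a α) (b α)) && g α)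
      = 2 * weight (fun α => (a α || b α) && g α) := by
    simp only [weight_eq_sum, ← Finset.sum_add_distrib, Finset.mul_sum]
    exact Finset.sum_congr rfl fun α _ => by
      cases a α <;> cases b α <;> cases g α <;> rfl
  have key2 : weight a + weight b + weight (fun α => xor (a α) (b α))
      = 2 * weight (fun α => a α || b α) := by
    simp only [weight_eq_sum, ← Finset.sum_add_distrib, Finset.mul_sum]
    exact Finset.sum_congr rfl fun α _ => by
      cases a α <;> cases b α <;> rfl
  have : 2 * (weight (fun α => (a α || b α) && g α) * Fintype.card (V → Bool))
      = 2 * (weight g * weight (fun α => a α || b α)) := by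
    calc 2 * (weight (fun α => (a α || b α) && g α) * Fintype.card (V → Bool))
        = (weight (fun α => a α && g α) + weight (fun α => b α && g α)
            + weight (fun α => (xor (a α) (b α)) && g α)) * Fintype.card (V → Bool) := by
          rw [key1]; ring
      _ = weight g * (weight a + weight b + weight (fun α => xor (a α) (b α))) := by
          rw [Nat.add_mul, Nat.add_mul, ha, hb, hab]; ring
      _ = 2 * (weight g * weight (fun α => a α || b α)) := by rw [key2]; ring
  omega

end Danira
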